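/- Let G be a finite simple graph with multicast sessions, and for each station r with M_r ≠ ∅ let Ī_r = { r' : M_{r'} ∩ ( {a} ∪ L²_a for some a ∈ M_r ) ≠ ∅ } be the set of stations (including r itself) whose session uses a link within two link-hops of some link of M_r. If each station r with M_r ≠ ∅ uses states of length l̄_r = ⌈log₂( max over r' ∈ Ī_r of |Ī_{r'}| )⌉, then a collision-free multicast configuration exists. -/

import Mathlib

set_option linter.unusedSectionVars false

/-- Two directed links are one-hop link-peers if they are distinct and the
transmitter of one equals the receiver of the other. -/
def linkPeer {V : Type*} (a b : V × V) : Prop :=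
  a ≠ b ∧ (a.1 = b.2 ∨ a.2 = b.1)

instance {V : Type*} [DecidableEq V] (a b : V × V) : Decidable (linkPeer a b) :=
  inferInstanceAs (Decidable (a ≠ b ∧ (a.1 = b.2 ∨ a.2 = b.1)))

/-- `b ∈ L²_a`: the link `b` is reachable from `a` in at most two steps of the
link-peer relation (via a genuine directed link of `G` as intermediate step). -/
def inL2 {V : Type*} (G : SimpleGraph V) (a b : V × V) : Prop :=
  linkPeer a b ∨ ∃ c : V × V, G.Adj c.1 c.2 ∧ linkPeer a c ∧ linkPeer c b

instance {V : Type*} [Fintype V] [DecidableEq V] (G : SimpleGraph V)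
    [DecidableRel G.Adj] (a b : V × V) : Decidable (inL2 G a b) :=
  inferInstanceAs
    (Decidable (linkPeer a b ∨ ∃ c : V × V, G.Adj c.1 c.2 ∧ linkPeer a c ∧ linkPeer c b))

/-- The multicast session of station `r`: the set of directed links
`M_r = {(r, r') : r' ∈ D_r}`. -/
def sessionM {V : Type*} [DecidableEq V] (D : V → Finset V) (r : V) : Finset (V × V) :=
  (D r).image fun r' => (r, r')

/-- `Ī_r = { r' : M_{r'} ∩ ({a} ∪ L²_a) ≠ ∅ for some a ∈ M_r }`: the stations
(including `r` itself) whose session uses a link within two link-hops of some link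
of `M_r`. -/
def Ibar {V : Type*} [Fintype V] [DecidableEq V] (G : SimpleGraph V)
    [DecidableRel G.Adj] (D : V → Finset V) (r : V) : Finset V :=
  Finset.univ.filter fun r' =>
    ∃ a ∈ sessionM D r, ∃ b ∈ sessionM D r', b = a ∨ inL2 G a b

/-! ### Auxiliary: fixed-width binary representations -/

/-- Binary representation of `n` with exactly `k` bits, most significant bit first. -/
def toBits : ℕ → ℕ → List Bool
  | 0, _ => []
  | (k+1), n => toBits k (n / 2) ++ [n % 2 == 1]

@[simp] lemma toBits_length (k n : ℕ) : (toBits k n).length = k := by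
  induction k generalizing n with
  | zero => rfl
  | succ k ih => simp [toBits, ih]

lemma toBits_take (k j n : ℕ) : (toBits (k + j) n).take k = toBits k (n / 2 ^ j) := by
  induction j generalizing n with
  | zero => simp [List.take_of_length_le]
  | succ j ih =>
    have : k + (j + 1) = (k + j) + 1 := by ring
    rw [this]
    show (toBits (k+j) (n/2) ++ [n % 2 == 1]).take k = _
    rw [List.take_append_of_le_length (by simp), ih]
    congr 1
    rw [Nat.div_div_eq_div_mul]
    congr 1
    rw [pow_succ]
    ring

lemma toBits_inj {k n m : ℕ} (hn : n < 2 ^ k) (hm : m < 2 ^ k)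
    (h : toBits k n = toBits k m) : n = m := by
  induction k generalizing n m with
  | zero => simp at hn hm; omega
  | succ k ih =>
    simp only [toBits] at h
    have h2 := List.append_inj h (by simp)
    have h3 : n / 2 = m / 2 := by
      apply ih
      · exact Nat.div_lt_of_lt_mul (by rw [← pow_succ']; exact hn)
      · exact Nat.div_lt_of_lt_mul (by rw [← pow_succ']; exact hm)
      · exact h2.1
    have h4 : n % 2 = m % 2 := by
      have := h2.2
      simp at this
      omega
    omega

lemma toBits_prefix_imp {k k' n n' : ℕ} (hk : k ≤ k') (hn : n < 2 ^ k) (hn' : n' < 2 ^ k')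
    (h : toBits k n <+: toBits k' n') : n = n' / 2 ^ (k' - k) := by
  have hkk : k' = k + (k' - k) := by omega
  have htake : (toBits k' n').take k = toBits k (n' / 2 ^ (k' - k)) := by
    conv_lhs => rw [hkk]
    rw [toBits_take]
  have heq : toBits k n = toBits k (n' / 2 ^ (k' - k)) := by
    rw [← htake]
    have := List.prefix_iff_eq_take.mp h
    rwa [toBits_length] at this
  apply toBits_inj hn _ heq
  rw [Nat.div_lt_iff_lt_mul (pow_pos (by norm_num : (0:ℕ) < 2) _), ← pow_add, ← hkk]
  exact hn'

/-! ### Auxiliary: the conflict relation -/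

section aux
variable {V : Type*} [Fintype V] [DecidableEq V] (G : SimpleGraph V)
    [DecidableRel G.Adj] (D : V → Finset V)

lemma linkPeer_symm {a b : V × V} (h : linkPeer a b) : linkPeer b a :=
  ⟨h.1.symm, h.2.symm.imp Eq.symm Eq.symm⟩

lemma inL2_symm {a b : V × V} (h : inL2 G a b) : inL2 G b a := by
  rcases h with h | ⟨c, hc, h1, h2⟩
  · exact Or.inl (linkPeer_symm h)
  · exact Or.inr ⟨c, hc, linkPeer_symm h2, linkPeer_symm h1⟩

/-- The conflict relation: two distinct stations having links within two
link-hops of each other. -/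
def conf (r r' : V) : Prop :=
  r ≠ r' ∧ ∃ a ∈ sessionM D r, ∃ a' ∈ sessionM D r', inL2 G a a'

lemma conf_symm {r r' : V} (h : conf G D r r') : conf G D r' r := by
  obtain ⟨hne, a, ha, a', ha', hl⟩ := h
  exact ⟨hne.symm, a', ha', a, ha, inL2_symm G hl⟩

lemma mem_Ibar_of_conf {r r' : V} (h : conf G D r r') : r' ∈ Ibar G D r := by
  obtain ⟨_, a, ha, a', ha', hl⟩ := h
  simp only [Ibar, Finset.mem_filter, Finset.mem_univ, true_and]
  exact ⟨a, ha, a', ha', Or.inr hl⟩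

lemma self_mem_Ibar {r : V} (h : (sessionM D r).Nonempty) : r ∈ Ibar G D r := by
  obtain ⟨a, ha⟩ := h
  simp only [Ibar, Finset.mem_filter, Finset.mem_univ, true_and]
  exact ⟨a, ha, a, ha, Or.inl rfl⟩

lemma nonempty_of_conf {r r' : V} (h : conf G D r r') : (sessionM D r).Nonempty := by
  obtain ⟨_, a, ha, _⟩ := h
  exact ⟨a, ha⟩

/-- The prescribed state length of station `r`. -/
noncomputable def slen (r : V) : ℕ :=
  Nat.clog 2 ((Ibar G D r).sup fun r' => (Ibar G D r').card)

lemma Ibar_card_le_pow_slen {r r' : V} (h : r' ∈ Ibar G D r) :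
    (Ibar G D r').card ≤ 2 ^ slen G D r := by
  calc (Ibar G D r').card ≤ (Ibar G D r).sup fun s => (Ibar G D s).card :=
        Finset.le_sup (f := fun s => (Ibar G D s).card) h
    _ ≤ 2 ^ slen G D r := Nat.le_pow_clog (by norm_num) _

/-- Greedy construction of the label function `c`. -/
lemma exists_labels (S : Finset V) :
    ∃ c : V → ℕ,
      (∀ r ∈ S, (sessionM D r).Nonempty → c r < 2 ^ slen G D r) ∧
      (∀ r ∈ S, ∀ r' ∈ S, conf G D r r' → slen G D r ≤ slen G D r' →
        c r ≠ c r' / 2 ^ (slen G D r' - slen G D r)) := by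
  classical
  induction S using Finset.induction_on with
  | empty => exact ⟨fun _ => 0, by simp, by simp⟩
  | @insert x S hx ih =>
    obtain ⟨c, hc1, hc2⟩ := ih
    by_cases hMx : (sessionM D x).Nonempty
    · -- choose a fresh value for x
      set l : V → ℕ := slen G D with hl
      set N : ℕ := (Ibar G D x).card with hN
      set L : ℕ := 2 ^ l x with hL
      have hxI : x ∈ Ibar G D x := self_mem_Ibar G D hMx
      have hN1 : 1 ≤ N := Finset.card_pos.mpr ⟨x, hxI⟩
      have hNL : N ≤ L := Ibar_card_le_pow_slen G D hxI
      have hLpos : 0 < L := pow_pos (by norm_num) _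
      -- the set of blocked values
      set bad : V → ℕ → Prop := fun r' v =>
        (l x ≤ l r' ∧ v = c r' / 2 ^ (l r' - l x)) ∨
        (l r' ≤ l x ∧ c r' = v / 2 ^ (l x - l r')) with hbad
      set blocked : Finset ℕ :=
        (Finset.range L).filter fun v => ∃ r' ∈ S, conf G D x r' ∧ bad r' v with hblocked
      set nbrs : Finset V := S.filter fun r' => conf G D x r' with hnbrs
      have hnbrs_sub : nbrs ⊆ (Ibar G D x).erase x := by
        intro r' hr'
        simp only [hnbrs, Finset.mem_filter] at hr'
        exact Finset.mem_erase.mpr ⟨(hr'.2).1.symm, mem_Ibar_of_conf G D hr'.2⟩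
      have hnbrs_card : nbrs.card ≤ N - 1 := by
        calc nbrs.card ≤ ((Ibar G D x).erase x).card := Finset.card_le_card hnbrs_sub
          _ = N - 1 := by rw [Finset.card_erase_of_mem hxI]
      -- each neighbor blocks at most L / N values (in the form N * card ≤ L)
      have hblock_each : ∀ r' ∈ nbrs,
          N * ((Finset.range L).filter fun v => bad r' v).card ≤ L := by
        intro r' hr'
        simp only [hnbrs, Finset.mem_filter] at hr'
        have hconf : conf G D x r' := hr'.2
        have hxIr' : N ≤ 2 ^ l r' := by
          have : x ∈ Ibar G D r' := mem_Ibar_of_conf G D (conf_symm G D hconf)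
          exact Ibar_card_le_pow_slen G D this
        by_cases hle : l x ≤ l r'
        · -- at most one blocked value
          have hsub : ((Finset.range L).filter fun v => bad r' v) ⊆
              {c r' / 2 ^ (l r' - l x)} := by
            intro v hv
            simp only [Finset.mem_filter, hbad] at hv
            rcases hv.2 with ⟨_, h⟩ | ⟨hge, h⟩
            · simp [h]
            · have hexact : l r' = l x := le_antisymm hge hle
              simp only [Finset.mem_singleton]
              rw [hexact] at h ⊢
              simpa using h.symm
          calc N * ((Finset.range L).filter fun v => bad r' v).card
              ≤ N * 1 := by
                exact Nat.mul_le_mul_left N (le_trans (Finset.card_le_card hsub) (by simp))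
            _ ≤ L := by simpa using hNL
        · -- at most 2^(l x - l r') blocked values
          push_neg at hle
          set d : ℕ := 2 ^ (l x - l r') with hd
          have hdpos : 0 < d := pow_pos (by norm_num) _
          have hcard : ((Finset.range L).filter fun v => bad r' v).card ≤ d := by
            have : ((Finset.range L).filter fun v => bad r' v).card ≤
                (Finset.range d).card := by
              apply Finset.card_le_card_of_injOn (fun v => v % d)
              · intro v hv
                exact Finset.mem_range.mpr (Nat.mod_lt _ hdpos)
              · intro v1 hv1 v2 hv2 hmod
                simp only [Finset.mem_coe, Finset.mem_filter, hbad] at hv1 hv2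
                dsimp only at hmod
                have e1 : v1 / d = c r' := by
                  rcases hv1.2 with ⟨h, _⟩ | ⟨_, h⟩
                  · exact absurd h (by omega)
                  · rw [hd]; exact h.symm
                have e2 : v2 / d = c r' := by
                  rcases hv2.2 with ⟨h, _⟩ | ⟨_, h⟩
                  · exact absurd h (by omega)
                  · rw [hd]; exact h.symm
                have h1 := Nat.div_add_mod v1 d
                have h2 := Nat.div_add_mod v2 d
                rw [e1] at h1
                rw [e2] at h2
                omega
            simpa using this
          calc N * ((Finset.range L).filter fun v => bad r' v).card
              ≤ (2 ^ l r') * d := Nat.mul_le_mul hxIr' hcard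
            _ = L := by rw [hd, hL, ← pow_add]; congr 1; omega
      -- total blocked count is < L
      have hblocked_sub : blocked ⊆ nbrs.biUnion fun r' =>
          (Finset.range L).filter fun v => bad r' v := by
        intro v hv
        simp only [hblocked, Finset.mem_filter, Finset.mem_range] at hv
        obtain ⟨hvL, r', hr'S, hconf, hb⟩ := hv
        apply Finset.mem_biUnion.mpr
        exact ⟨r', by simp [hnbrs, hr'S, hconf],
          by simp [Finset.mem_filter, Finset.mem_range, hvL, hb]⟩
      have hcount : N * blocked.card < N * L := by
        calc N * blocked.card
            ≤ N * ∑ r' ∈ nbrs, ((Finset.range L).filter fun v => bad r' v).card := by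
              apply Nat.mul_le_mul_left
              exact le_trans (Finset.card_le_card hblocked_sub) (Finset.card_biUnion_le)
          _ = ∑ r' ∈ nbrs, N * ((Finset.range L).filter fun v => bad r' v).card := by
              rw [Finset.mul_sum]
          _ ≤ ∑ _r' ∈ nbrs, L := Finset.sum_le_sum hblock_each
          _ = nbrs.card * L := by rw [Finset.sum_const, smul_eq_mul]
          _ ≤ (N - 1) * L := Nat.mul_le_mul_right L hnbrs_card
          _ < N * L := (Nat.mul_lt_mul_right hLpos).mpr (by omega)
      have hblocked_lt : blocked.card < L := lt_of_mul_lt_mul_left hcount (Nat.zero_le N)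
      -- choose a fresh value
      have hfresh : ∃ v ∈ Finset.range L, v ∉ blocked := by
        by_contra hcon
        push_neg at hcon
        have : Finset.range L ⊆ blocked := hcon
        have := Finset.card_le_card this
        simp only [Finset.card_range] at this
        omega
      obtain ⟨v, hvL, hvb⟩ := hfresh
      refine ⟨Function.update c x v, ?_, ?_⟩
      · intro r hr _
        rcases Finset.mem_insert.mp hr with rfl | hrS
        · rw [Function.update_self]
          exact Finset.mem_range.mp hvL
        · rw [Function.update_of_ne (by rintro rfl; exact hx hrS)]
          exact hc1 r hrS ‹_›
      · intro r hr r' hr' hconf hlen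
        rcases Finset.mem_insert.mp hr with rfl | hrS
        · rcases Finset.mem_insert.mp hr' with rfl | hr'S
          · exact absurd rfl hconf.1
          · rw [Function.update_self, Function.update_of_ne (by rintro rfl; exact hx hr'S)]
            intro heq
            apply hvb
            simp only [hblocked, Finset.mem_filter]
            exact ⟨hvL, r', hr'S, hconf, Or.inl ⟨hlen, heq⟩⟩
        · rcases Finset.mem_insert.mp hr' with rfl | hr'S
          · rw [Function.update_self, Function.update_of_ne (by rintro rfl; exact hx hrS)]
            intro heq
            apply hvb
            simp only [hblocked, Finset.mem_filter]
            exact ⟨hvL, r, hrS, conf_symm G D hconf, Or.inr ⟨hlen, heq⟩⟩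
          · rw [Function.update_of_ne (by rintro rfl; exact hx hrS),
              Function.update_of_ne (by rintro rfl; exact hx hr'S)]
            exact hc2 r hrS r' hr'S hconf hlen
    · -- x has no session: no new constraints
      refine ⟨Function.update c x 0, ?_, ?_⟩
      · intro r hr hne
        rcases Finset.mem_insert.mp hr with rfl | hrS
        · exact absurd hne hMx
        · rw [Function.update_of_ne (by rintro rfl; exact hx hrS)]
          exact hc1 r hrS hne
      · intro r hr r' hr' hconf hlen
        rcases Finset.mem_insert.mp hr with rfl | hrS
        · exact absurd (nonempty_of_conf G D hconf) hMx
        · rcases Finset.mem_insert.mp hr' with rfl | hr'S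
          · exact absurd (nonempty_of_conf G D (conf_symm G D hconf)) hMx
          · rw [Function.update_of_ne (by rintro rfl; exact hx hrS),
              Function.update_of_ne (by rintro rfl; exact hx hr'S)]
            exact hc2 r hrS r' hr'S hconf hlen

end aux

/-- If each station `r` with `M_r ≠ ∅` uses states of length
`l̄_r = ⌈log₂(max_{r' ∈ Ī_r} |Ī_{r'}|)⌉`, then a collision-free multicast
configuration exists. -/
theorem multicast_upperBound_collisionFree_exists {V : Type*} [Fintype V]
    [DecidableEq V] (G : SimpleGraph V) [DecidableRel G.Adj]
    (D : V → Finset V) (hD : ∀ r : V, D r ⊆ G.neighborFinset r) :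
    ∃ X : V → List Bool,
      (∀ r : V, (sessionM D r).Nonempty →
        (X r).length = Nat.clog 2 ((Ibar G D r).sup fun r' => (Ibar G D r').card)) ∧
      ∀ r r' : V, r ≠ r' → ∀ a ∈ sessionM D r, ∀ a' ∈ sessionM D r',
        inL2 G a a' → ¬ X r <+: X r' ∧ ¬ X r' <+: X r := by
  classical
  obtain ⟨c, hc1, hc2⟩ := exists_labels G D Finset.univ
  refine ⟨fun r => toBits (slen G D r) (c r), ?_, ?_⟩
  · intro r _
    exact toBits_length _ _
  · intro r r' hne a ha a' ha' hl
    have hconf : conf G D r r' := ⟨hne, a, ha, a', ha', hl⟩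
    have hconf' : conf G D r' r := conf_symm G D hconf
    have hMr : (sessionM D r).Nonempty := ⟨a, ha⟩
    have hMr' : (sessionM D r').Nonempty := ⟨a', ha'⟩
    have hbr : c r < 2 ^ slen G D r := hc1 r (Finset.mem_univ r) hMr
    have hbr' : c r' < 2 ^ slen G D r' := hc1 r' (Finset.mem_univ r') hMr'
    constructor
    · intro hpre
      by_cases hle : slen G D r ≤ slen G D r'
      · exact hc2 r (Finset.mem_univ r) r' (Finset.mem_univ r') hconf hle
          (toBits_prefix_imp hle hbr hbr' hpre)
      · have := hpre.length_le
        simp only [toBits_length] at this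
        omega
    · intro hpre
      by_cases hle : slen G D r' ≤ slen G D r
      · exact hc2 r' (Finset.mem_univ r') r (Finset.mem_univ r) hconf' hle
          (toBits_prefix_imp hle hbr' hbr hpre)
      · have := hpre.length_le
        simp only [toBits_length] at this
        omega
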